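/- Let 0 < a < b, I = {z ∈ ℂ : |z| ≤ a}, O = {z ∈ ℂ : |z| ≥ b}, and let k be a positive integer. Then for every rational function r = P/Q with P, Q complex polynomials of degree at most k, P ≠ 0 and Q ≠ 0, the separation ratio satisfies sup_{z ∈ O} |r(z)| / inf_{z ∈ I} |r(z)| ≥ (a/b)^k, where the ratio is interpreted in the extended nonnegative reals [0, ∞]. Hence the infimum of the Zolotarev third problem Z_k(O, I) equals (a/b)^k and is attained by r(z) = z^{−k}. -/

import Mathlib

/-!
By Jensen's formula, the geometric mean of `|p|` over the circle `|z| = R` (the Mahler measure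
of `p (R z)`) is `μ_R(p) = |lc p| ∏ max(R, |α|)`, the product over the roots `α` of `p`, and a
pointwise bound `|p| ≤ |q|` on the circle passes to these means. If `m |Q| ≤ |P|` on `|z| = a`
and `|P| ≤ M |Q|` on `|z| = b`, then
`m μ_a(Q) ≤ μ_a(P) ≤ μ_b(P) ≤ M μ_b(Q) ≤ M (b / a) ^ deg Q μ_a(Q)`, so `(a / b) ^ k m ≤ M`.
For `r = z⁻ᵏ` the ratio is exactly `(a / b) ^ k`.
-/

open Polynomial Real Filter Metric MeasureTheory
open scoped NNReal ENNReal

theorem circleAverage_mono_codiscreteWithin {c : ℂ} {R : ℝ} {f₁ f₂ : ℂ → ℝ}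
    (hf₁ : CircleIntegrable f₁ c R) (hf₂ : CircleIntegrable f₂ c R)
    (h : f₁ ≤ᶠ[codiscreteWithin (sphere c |R|)] f₂) (hR : R ≠ 0) :
    circleAverage f₁ c R ≤ circleAverage f₂ c R := by
  unfold circleAverage
  gcongr
  apply intervalIntegral.integral_mono_ae_restrict two_pi_pos.le hf₁ hf₂
  apply ae_restrict_le_codiscreteWithin measurableSet_Icc
  exact codiscreteWithin_mono (by tauto) (circleMap_preimage_codiscrete hR h)

theorem Complex.sphere_infinite (c : ℂ) {R : ℝ} (hR : 0 < R) : (sphere c R).Infinite := by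
  refine ((Set.Ico_infinite two_pi_pos).image
    (injOn_circleMap_of_abs_sub_le' (c := c) hR.ne' (by simp))).mono ?_
  rintro _ ⟨θ, -, rfl⟩
  exact circleMap_mem_sphere c hR.le θ

theorem Polynomial.exists_mem_sphere_eval_ne_zero {p : ℂ[X]} (hp : p ≠ 0) {R : ℝ} (hR : 0 < R) :
    ∃ z ∈ sphere (0 : ℂ) R, p.eval z ≠ 0 := by
  by_contra! h
  exact hp (p.eq_zero_of_infinite_isRoot ((Complex.sphere_infinite 0 hR).mono h))

theorem Polynomial.mahlerMeasure_le_of_forall_norm_eval_le {p q : ℂ[X]}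
    (h : ∀ z ∈ sphere (0 : ℂ) 1, ‖p.eval z‖ ≤ ‖q.eval z‖) :
    p.mahlerMeasure ≤ q.mahlerMeasure := by
  rcases eq_or_ne p 0 with rfl | hp
  · simpa using q.mahlerMeasure_nonneg
  have hq : q ≠ 0 := by
    rintro rfl
    obtain ⟨z, hz, hpz⟩ := exists_mem_sphere_eval_ne_zero hp one_pos
    simpa [hpz] using h z hz
  rw [mahlerMeasure, mahlerMeasure, if_pos hp, if_pos hq, exp_le_exp, logMahlerMeasure_def,
    logMahlerMeasure_def]
  have hroots : {z | p.eval z ≠ 0} ∈ codiscreteWithin (sphere (0 : ℂ) |1|) := by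
    simpa [Set.compl_ofPred] using compl_finite_mem_codiscreteWithin (p.finite_setOfPred_isRoot hp)
  refine circleAverage_mono_codiscreteWithin ?_ ?_ ?_ one_ne_zero
  · exact (analyticOnNhd_id.aeval_polynomial p).meromorphicOn.circleIntegrable_log_norm
  · exact (analyticOnNhd_id.aeval_polynomial q).meromorphicOn.circleIntegrable_log_norm
  -- at a root of `p`, `log ‖p z‖ = log 0 = 0` need not be `≤ log ‖q z‖`
  · filter_upwards [hroots, self_mem_codiscreteWithin _] with z hz hz1
    exact log_le_log (norm_pos_iff.2 hz) (h z (by simpa using hz1))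

theorem Polynomial.mahlerMeasure_comp_C_mul_X (p : ℂ[X]) {R : ℂ} (hR : R ≠ 0) :
    (p.comp (C R * X)).mahlerMeasure = ‖p.leadingCoeff‖ * (p.roots.map (max ‖R‖ ‖·‖)).prod := by
  conv_lhs => rw [(IsAlgClosed.splits p).eq_prod_roots]
  rw [mul_comp, C_comp, mahlerMeasure_mul, mahlerMeasure_const, multiset_prod_comp,
    prod_mahlerMeasure_eq_mahlerMeasure_prod, Multiset.map_map, Multiset.map_map]
  congr 2
  refine Multiset.map_congr rfl fun α _ => ?_
  simp only [Function.comp_apply]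
  rw [sub_comp, X_comp, C_comp, sub_eq_add_neg, ← C_neg, mahlerMeasure_C_mul_X_add_C hR, norm_neg]

theorem Multiset.prod_map_max_le_div_pow_mul {a b : ℝ} (ha : 0 < a) (hab : a ≤ b)
    (s : Multiset ℂ) :
    (s.map (max b ‖·‖)).prod ≤ (b / a) ^ card s * (s.map (max a ‖·‖)).prod := by
  rw [← Multiset.prod_replicate, ← Multiset.map_const', ← Multiset.prod_map_mul]
  have hba : 1 ≤ b / a := (one_le_div ha).2 hab
  refine Multiset.prod_map_le_prod_map₀ _ _ (fun _ _ => by positivity) fun x _ => ?_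
  rw [mul_max_of_nonneg _ _ (by positivity), div_mul_cancel₀ b ha.ne']
  exact max_le_max le_rfl (le_mul_of_one_le_left (norm_nonneg x) hba)

theorem Polynomial.mahlerMeasure_comp_C_mul_X_le {p q : ℂ[X]} {R : ℝ} (hR : 0 ≤ R)
    (h : ∀ z ∈ sphere (0 : ℂ) R, ‖p.eval z‖ ≤ ‖q.eval z‖) :
    (p.comp (C (R : ℂ) * X)).mahlerMeasure ≤ (q.comp (C (R : ℂ) * X)).mahlerMeasure :=
  mahlerMeasure_le_of_forall_norm_eval_le fun z hz => by
    simpa [eval_comp] using h _ (by simp_all [abs_of_nonneg hR])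

theorem Polynomial.div_pow_mul_le_of_norm_eval_bounds {P Q : ℂ[X]} {a b m M : ℝ} {k : ℕ}
    (ha : 0 < a) (hab : a ≤ b) (hm : 0 ≤ m) (hM : 0 ≤ M) (hQ : Q ≠ 0) (hQk : Q.natDegree ≤ k)
    (hin : ∀ z ∈ sphere (0 : ℂ) a, m * ‖Q.eval z‖ ≤ ‖P.eval z‖)
    (hout : ∀ z ∈ sphere (0 : ℂ) b, ‖P.eval z‖ ≤ M * ‖Q.eval z‖) :
    (a / b) ^ k * m ≤ M := by
  have hb : 0 < b := ha.trans_le hab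
  have hmahler : ∀ {R : ℝ}, 0 < R → ∀ p : ℂ[X], (p.comp (C (R : ℂ) * X)).mahlerMeasure =
      ‖p.leadingCoeff‖ * (p.roots.map (max R ‖·‖)).prod := fun hR p => by
    rw [mahlerMeasure_comp_C_mul_X p (by exact_mod_cast hR.ne'), Complex.norm_of_nonneg hR.le]
  have hinner := mahlerMeasure_comp_C_mul_X_le (p := C (m : ℂ) * Q) (q := P) ha.le
    fun z hz => by simpa [abs_of_nonneg hm] using hin z hz
  have houter := mahlerMeasure_comp_C_mul_X_le (p := P) (q := C (M : ℂ) * Q) hb.le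
    fun z hz => by simpa [abs_of_nonneg hM] using hout z hz
  rw [mul_comp, C_comp, mahlerMeasure_mul, mahlerMeasure_const, Complex.norm_of_nonneg hm,
    hmahler ha, hmahler ha] at hinner
  rw [mul_comp, C_comp, mahlerMeasure_mul, mahlerMeasure_const, Complex.norm_of_nonneg hM,
    hmahler hb, hmahler hb] at houter
  have hPab : (P.roots.map (max a ‖·‖)).prod ≤ (P.roots.map (max b ‖·‖)).prod :=
    Multiset.prod_map_le_prod_map₀ _ _ (fun _ _ => by positivity)
      fun _ _ => max_le_max hab le_rfl
  have hQba : (Q.roots.map (max b ‖·‖)).prod ≤ (b / a) ^ k * (Q.roots.map (max a ‖·‖)).prod :=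
    (Multiset.prod_map_max_le_div_pow_mul ha hab _).trans <|
      mul_le_mul_of_nonneg_right (pow_le_pow_right₀ ((one_le_div ha).2 hab)
        ((card_roots' Q).trans hQk)) (Multiset.prod_nonneg fun _ h => by
          obtain ⟨x, -, rfl⟩ := Multiset.mem_map.1 h; positivity)
  have hpos : 0 < ‖Q.leadingCoeff‖ * (Q.roots.map (max a ‖·‖)).prod :=
    mul_pos (norm_pos_iff.2 (leadingCoeff_ne_zero.2 hQ)) (Multiset.prod_pos fun _ h => by
      obtain ⟨x, -, rfl⟩ := Multiset.mem_map.1 h; positivity)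
  have key : m * (‖Q.leadingCoeff‖ * (Q.roots.map (max a ‖·‖)).prod) ≤
      (M * (b / a) ^ k) * (‖Q.leadingCoeff‖ * (Q.roots.map (max a ‖·‖)).prod) :=
    calc _ ≤ _ := hinner
      _ ≤ ‖P.leadingCoeff‖ * (P.roots.map (max b ‖·‖)).prod := by gcongr
      _ ≤ _ := houter
      _ ≤ M * (‖Q.leadingCoeff‖ * ((b / a) ^ k * (Q.roots.map (max a ‖·‖)).prod)) := by gcongr
      _ = _ := by ring
  calc (a / b) ^ k * m ≤ (a / b) ^ k * (M * (b / a) ^ k) := by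
        gcongr; exact le_of_mul_le_mul_right key hpos
    _ = M := by
      rw [mul_left_comm, ← mul_pow, div_mul_div_comm, mul_comm a b, div_self (by positivity),
        one_pow, mul_one]

theorem mul_norm_le_of_coe_le_nnnorm_div {E : Type*} [SeminormedAddGroup E] {x y : E} {r : ℝ≥0}
    (h : (r : ℝ≥0∞) ≤ ‖x‖₊ / ‖y‖₊) : r * ‖y‖ ≤ ‖x‖ := by
  rcases eq_or_ne ‖y‖₊ 0 with hy | hy
  · rw [← coe_nnnorm y, hy]; simp
  rw [ENNReal.le_div_iff_mul_le (Or.inl (ENNReal.coe_ne_zero.2 hy)) (Or.inl ENNReal.coe_ne_top)]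
    at h
  exact_mod_cast h

theorem norm_le_mul_of_nnnorm_div_le_coe {E : Type*} [SeminormedAddGroup E] {x y : E} {r : ℝ≥0}
    (h : (‖x‖₊ : ℝ≥0∞) / ‖y‖₊ ≤ r) : ‖x‖ ≤ r * ‖y‖ := by
  rw [ENNReal.div_le_iff_le_mul (Or.inr ENNReal.coe_ne_top) (Or.inl ENNReal.coe_ne_top)] at h
  exact_mod_cast h

theorem Polynomial.ofReal_div_pow_le_iSup_div_iInf {P Q : ℂ[X]} {a b : ℝ} {k : ℕ} (ha : 0 < a)
    (hab : a ≤ b) (hP : P ≠ 0) (hQ : Q ≠ 0) (hQk : Q.degree ≤ k) :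
    ENNReal.ofReal ((a / b) ^ k) ≤
      (⨆ z ∈ {z : ℂ | b ≤ ‖z‖}, (‖P.eval z‖₊ : ℝ≥0∞) / (‖Q.eval z‖₊ : ℝ≥0∞)) /
        (⨅ z ∈ {z : ℂ | ‖z‖ ≤ a}, (‖P.eval z‖₊ : ℝ≥0∞) / (‖Q.eval z‖₊ : ℝ≥0∞)) := by
  set f : ℂ → ℝ≥0∞ := fun z => (‖P.eval z‖₊ : ℝ≥0∞) / ‖Q.eval z‖₊
  have hb : 0 < b := ha.trans_le hab
  have hc : ENNReal.ofReal ((a / b) ^ k) ≠ 0 := by positivity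
  have hsup : (⨆ z ∈ {z : ℂ | b ≤ ‖z‖}, f z) ≠ 0 := by
    obtain ⟨z, hz, hPz⟩ := exists_mem_sphere_eval_ne_zero hP hb
    refine (lt_of_lt_of_le ?_ (le_iSup₂ (f := fun z (_ : z ∈ {z : ℂ | b ≤ ‖z‖}) => f z) z
      (by simp_all))).ne'
    exact ENNReal.div_pos (by simpa using hPz) ENNReal.coe_ne_top
  have hinf : (⨅ z ∈ {z : ℂ | ‖z‖ ≤ a}, f z) ≠ ⊤ := by
    obtain ⟨z, hz, hQz⟩ := exists_mem_sphere_eval_ne_zero hQ ha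
    exact ne_top_of_le_ne_top (ENNReal.div_ne_top ENNReal.coe_ne_top (by simpa using hQz))
      (iInf₂_le z (by simp_all))
  rw [ENNReal.le_div_iff_mul_le (Or.inr hsup) (Or.inl hinf), mul_comm,
    ← ENNReal.le_div_iff_mul_le (Or.inl hc) (Or.inl ENNReal.ofReal_ne_top)]
  refine ENNReal.le_of_forall_pos_nnreal_lt fun m _ hm => ?_
  rcases eq_top_or_lt_top (⨆ z ∈ {z : ℂ | b ≤ ‖z‖}, f z) with htop | hfin
  · rw [htop, ENNReal.top_div_of_ne_top ENNReal.ofReal_ne_top]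
    exact le_top
  lift (⨆ z ∈ {z : ℂ | b ≤ ‖z‖}, f z) to ℝ≥0 using hfin.ne with M hM
  have hin : ∀ z ∈ sphere (0 : ℂ) a, m * ‖Q.eval z‖ ≤ ‖P.eval z‖ := fun z hz =>
    mul_norm_le_of_coe_le_nnnorm_div <| hm.le.trans <| iInf₂_le z (by simp_all)
  have hout : ∀ z ∈ sphere (0 : ℂ) b, ‖P.eval z‖ ≤ M * ‖Q.eval z‖ := fun z hz =>
    norm_le_mul_of_nnnorm_div_le_coe <| hM ▸
      le_iSup₂ (f := fun z (_ : z ∈ {z : ℂ | b ≤ ‖z‖}) => f z) z (by simp_all)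
  have := div_pow_mul_le_of_norm_eval_bounds ha hab m.2 M.2 hQ
    (natDegree_le_iff_degree_le.2 hQk) hin hout
  rw [ENNReal.le_div_iff_mul_le (Or.inl hc) (Or.inl ENNReal.ofReal_ne_top), mul_comm,
    ← ENNReal.ofReal_coe_nnreal, ← ENNReal.ofReal_mul (by positivity), ← ENNReal.ofReal_coe_nnreal]
  exact ENNReal.ofReal_le_ofReal this

theorem iSup_div_iInf_one_div_pow_le {a b : ℝ} (ha : 0 < a) (hb : 0 < b) (k : ℕ) :
    (⨆ z ∈ {z : ℂ | b ≤ ‖z‖}, (‖(1 : ℂ)‖₊ : ℝ≥0∞) / (‖z ^ k‖₊ : ℝ≥0∞)) /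
      (⨅ z ∈ {z : ℂ | ‖z‖ ≤ a}, (‖(1 : ℂ)‖₊ : ℝ≥0∞) / (‖z ^ k‖₊ : ℝ≥0∞)) ≤
      ENNReal.ofReal ((a / b) ^ k) := by
  have hf : ∀ z : ℂ, (‖(1 : ℂ)‖₊ : ℝ≥0∞) / ‖z ^ k‖₊ = (ENNReal.ofReal ‖z‖ ^ k)⁻¹ := fun z => by
    rw [nnnorm_one, ENNReal.coe_one, one_div, nnnorm_pow, ENNReal.coe_pow, ← enorm_eq_nnnorm,
      ofReal_norm]
  have hsup : (⨆ z ∈ {z : ℂ | b ≤ ‖z‖}, (‖(1 : ℂ)‖₊ : ℝ≥0∞) / ‖z ^ k‖₊) ≤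
      (ENNReal.ofReal b ^ k)⁻¹ :=
    iSup₂_le fun z hz => by rw [hf]; gcongr; exact hz
  have hinf : (ENNReal.ofReal a ^ k)⁻¹ ≤
      ⨅ z ∈ {z : ℂ | ‖z‖ ≤ a}, (‖(1 : ℂ)‖₊ : ℝ≥0∞) / ‖z ^ k‖₊ :=
    le_iInf₂ fun z hz => by rw [hf]; gcongr; exact hz
  calc _ ≤ (ENNReal.ofReal b ^ k)⁻¹ / (ENNReal.ofReal a ^ k)⁻¹ := ENNReal.div_le_div hsup hinf
    _ = _ := by
      rw [ENNReal.div_eq_inv_mul, inv_inv, ENNReal.ofReal_pow (by positivity),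
        ENNReal.ofReal_div_of_pos hb, div_eq_mul_inv, mul_pow, ENNReal.inv_pow, mul_comm]

theorem zolotarev_third_problem_annulus_general (a b : ℝ) (ha : 0 < a) (hab : a < b)
    (k : ℕ) :
    (∀ P Q : Polynomial ℂ, P ≠ 0 → Q ≠ 0 → P.degree ≤ (k : ℕ) → Q.degree ≤ (k : ℕ) →
      ENNReal.ofReal ((a / b) ^ k) ≤
        (⨆ z ∈ {z : ℂ | b ≤ ‖z‖},
            (‖P.eval z‖₊ : ENNReal) / (‖Q.eval z‖₊ : ENNReal)) /
          (⨅ z ∈ {z : ℂ | ‖z‖ ≤ a},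
            (‖P.eval z‖₊ : ENNReal) / (‖Q.eval z‖₊ : ENNReal))) ∧
    (⨆ z ∈ {z : ℂ | b ≤ ‖z‖},
        (‖(1 : ℂ)‖₊ : ENNReal) / (‖z ^ k‖₊ : ENNReal)) /
      (⨅ z ∈ {z : ℂ | ‖z‖ ≤ a},
        (‖(1 : ℂ)‖₊ : ENNReal) / (‖z ^ k‖₊ : ENNReal))
      = ENNReal.ofReal ((a / b) ^ k) := by
  refine ⟨fun P Q hP hQ _ hQk => ofReal_div_pow_le_iSup_div_iInf ha hab.le hP hQ hQk, ?_⟩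
  refine le_antisymm (iSup_div_iInf_one_div_pow_le ha (ha.trans hab) k) ?_
  simpa using ofReal_div_pow_le_iSup_div_iInf (P := 1) (Q := X ^ k) ha hab.le one_ne_zero
    (pow_ne_zero k X_ne_zero) (degree_X_pow_le k)

/-- For `0 < a < b`, `I = {|z| ≤ a}`, `O = {|z| ≥ b}`, every rational
function `r = P/Q` with `deg P ≤ k`, `deg Q ≤ k`, `P ≠ 0 ≠ Q` has separation ratio
(in `[0,∞]`) `sup_{z∈O}|r| / inf_{z∈I}|r| ≥ (a/b)^k`; the infimum of the Zolotarev
third problem `Z_k(O,I)` equals `(a/b)^k` and is attained by `r(z) = z^{−k}`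
(i.e. `P = 1`, `Q = z^k`). -/
theorem zolotarev_third_problem_annulus (a b : ℝ) (ha : 0 < a) (hab : a < b)
    (k : ℕ) (hk : 0 < k) :
    (∀ P Q : Polynomial ℂ, P ≠ 0 → Q ≠ 0 → P.degree ≤ (k : ℕ) → Q.degree ≤ (k : ℕ) →
      ENNReal.ofReal ((a / b) ^ k) ≤
        (⨆ z ∈ {z : ℂ | b ≤ ‖z‖},
            (‖P.eval z‖₊ : ENNReal) / (‖Q.eval z‖₊ : ENNReal)) /
          (⨅ z ∈ {z : ℂ | ‖z‖ ≤ a},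
            (‖P.eval z‖₊ : ENNReal) / (‖Q.eval z‖₊ : ENNReal))) ∧
    (⨆ z ∈ {z : ℂ | b ≤ ‖z‖},
        (‖(1 : ℂ)‖₊ : ENNReal) / (‖z ^ k‖₊ : ENNReal)) /
      (⨅ z ∈ {z : ℂ | ‖z‖ ≤ a},
        (‖(1 : ℂ)‖₊ : ENNReal) / (‖z ^ k‖₊ : ENNReal))
      = ENNReal.ofReal ((a / b) ^ k) :=
  zolotarev_third_problem_annulus_general a b ha hab k
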